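/- Let A, B, C be commutative rings that are ℚ-algebras, let g : A → B be an m-homomorphism and f : B → C an n-homomorphism. Then the composition f ∘ g : A → C is an nm-homomorphism. -/

import Mathlib

open PowerSeries

noncomputable def logOneAdd {A : Type*} [CommRing A] [Algebra ℚ A] (a : A) : PowerSeries A :=
  PowerSeries.mk fun k => ((-1 : ℚ) ^ (k + 1) / k) • a ^ k

noncomputable def mapCoeff {A B : Type*} [CommRing A] [CommRing B] [Algebra ℚ A] [Algebra ℚ B]
    (f : A →ₗ[ℚ] B) (p : PowerSeries A) : PowerSeries B :=
  PowerSeries.mk fun k => f (PowerSeries.coeff k p)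

noncomputable def expPS {B : Type*} [CommRing B] [Algebra ℚ B] (p : PowerSeries B) : PowerSeries B :=
  PowerSeries.mk fun k => ∑ m ∈ Finset.range (k + 1),
    ((m.factorial : ℚ)⁻¹) • PowerSeries.coeff k (p ^ m)

noncomputable def charFun {A B : Type*} [CommRing A] [CommRing B] [Algebra ℚ A] [Algebra ℚ B]
    (f : A →ₗ[ℚ] B) (a : A) : PowerSeries B :=
  expPS (mapCoeff f (logOneAdd a))

noncomputable def psi {A B : Type*} [CommRing A] [CommRing B] [Algebra ℚ A] [Algebra ℚ B]
    (f : A →ₗ[ℚ] B) (a : A) (k : ℕ) : B :=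
  PowerSeries.coeff k (charFun f a)

def IsNHom {A B : Type*} [CommRing A] [CommRing B] [Algebra ℚ A] [Algebra ℚ B]
    (f : A →ₗ[ℚ] B) (n : ℕ) : Prop :=
  f 1 = n • (1 : B) ∧ ∀ k, n + 1 ≤ k → ∀ a : A, psi f a k = 0

noncomputable def frob {A B : Type*} [CommRing A] [CommRing B] [Algebra ℚ A] [Algebra ℚ B]
    (f : A →ₗ[ℚ] B) : (k : ℕ) → (Fin k → A) → B
  | 0, _ => 1
  | k + 1, a =>
      f (a (Fin.last k)) * frob f k (fun i => a i.castSucc)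
        - ∑ i : Fin k, frob f k
            (Function.update (fun j : Fin k => a j.castSucc) i (a i.castSucc * a (Fin.last k)))

/-!
Write `L = ĝ(log(1 + aT))` and `b = R(g, a) - 1`. Then `L = log(1 + b)`, so
`R(f ∘ g, a) = exp(f̂(log(1 + b)))`, which is the value at `S = 1` of the characteristic function
`R(f̂, b)(S) = ∑ₖ ψₖ(f̂, b) Sᵏ` of the coefficientwise extension `f̂ : B⟦T⟧ → C⟦T⟧`; the sum
converges `T`-adically because `Tᵏ ∣ ψₖ(f̂, b)`. As `g` is an `m`-homomorphism, `b` is a polynomial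
of degree at most `m`, hence `ψₖ(f̂, b)` is a polynomial of degree at most `km`. It vanishes for
`k > n`, because the extension of `f` to `B[T]` is again an `n`-homomorphism: its `ψₖ` is a
polynomial whose value at every rational `t` is `ψₖ(f, b(t)) = 0`.
-/

open Finset
open scoped Polynomial

section PowerSeriesSubst
variable {R : Type*} [CommRing R]

theorem coeff_pow_eq_zero_of_lt {p : R⟦X⟧} (hp : constantCoeff p = 0) {j r : ℕ} (h : j < r) :
    coeff j (p ^ r) = 0 :=
  coeff_of_lt_order _ ((Nat.cast_lt.2 h).trans_le (le_order_pow_of_constantCoeff_eq_zero r hp))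

variable {S : Type*} [CommRing S] [Algebra R S]

theorem coeff_subst_eq_sum_range (f : R⟦X⟧) {b : S⟦X⟧} (hb : constantCoeff b = 0) {j N : ℕ}
    (hN : j < N) : coeff j (f.subst b) = ∑ d ∈ range N, coeff d f • coeff j (b ^ d) := by
  rw [coeff_subst' (HasSubst.of_constantCoeff_zero' hb)]
  refine finsum_eq_sum_of_support_subset _ fun d hd => ?_
  by_contra hdN
  rw [mem_coe, mem_range, not_lt] at hdN
  exact hd (by simp only [coeff_pow_eq_zero_of_lt hb (show j < d by omega), smul_zero])

theorem subst_one {b : S⟦X⟧} (hb : HasSubst b) : (1 : R⟦X⟧).subst b = 1 := by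
  rw [← coe_substAlgHom hb, map_one]

end PowerSeriesSubst

section ExpLog
variable {A : Type*} [CommRing A] [Algebra ℚ A]

theorem coeff_expPS_eq_sum_range {p : A⟦X⟧} (hp : constantCoeff p = 0) {k N : ℕ} (hN : k < N) :
    coeff k (expPS p) = ∑ r ∈ range N, (r.factorial : ℚ)⁻¹ • coeff k (p ^ r) := by
  rw [expPS, coeff_mk]
  refine sum_subset (range_subset_range.2 hN) fun r _ hr => ?_
  rw [mem_range, not_lt] at hr
  rw [coeff_pow_eq_zero_of_lt hp (by omega), smul_zero]

theorem constantCoeff_expPS (p : A⟦X⟧) : constantCoeff (expPS p) = 1 := by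
  rw [← coeff_zero_eq_constantCoeff_apply, expPS, coeff_mk]
  simp

theorem expPS_eq_subst_exp {p : A⟦X⟧} (hp : constantCoeff p = 0) : expPS p = (exp A).subst p := by
  ext k
  rw [coeff_subst_eq_sum_range _ hp k.lt_succ_self, expPS, coeff_mk]
  refine sum_congr rfl fun m _ => ?_
  rw [coeff_exp, smul_eq_mul, ← Algebra.smul_def, one_div]

theorem one_add_X_mul_derivative_log : (1 + X) * d⁄dX A (log A) = 1 := by
  ext n
  rw [deriv_log, add_mul, one_mul, map_add, coeff_one]
  cases n with
  | zero => simp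
  | succ n => simp [pow_succ]

theorem log_subst_exp_sub_one : (log A).subst (exp A - 1) = X := by
  have : IsAddTorsionFree A := .of_module_rat A
  have hc : constantCoeff (exp A - 1) = 0 := by simp [constantCoeff_exp]
  have hsub : HasSubst (exp A - 1) := HasSubst.of_constantCoeff_zero' hc
  have hinv : exp A * (d⁄dX A (log A)).subst (exp A - 1) = 1 := by
    have h := congrArg (subst (exp A - 1)) (one_add_X_mul_derivative_log (A := A))
    rwa [subst_mul hsub, subst_add hsub, subst_X hsub, subst_one hsub, add_sub_cancel] at h
  refine derivative.ext ?_ ?_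
  · rw [derivative_subst hsub, map_sub, derivative_exp, Derivation.map_one_eq_zero, sub_zero,
      mul_comm, hinv, derivative_X]
  · rw [constantCoeff_X]
    exact constantCoeff_subst_eq_zero hc _ constantCoeff_log

theorem log_subst_expPS_sub_one {L : A⟦X⟧} (hL : constantCoeff L = 0) :
    (log A).subst (expPS L - 1) = L := by
  have hsub : HasSubst (exp A - 1) :=
    HasSubst.of_constantCoeff_zero' (by simp [constantCoeff_exp])
  have hL' : HasSubst L := HasSubst.of_constantCoeff_zero' hL
  rw [expPS_eq_subst_exp hL, ← subst_one (R := A) hL', ← subst_sub hL',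
    ← subst_comp_subst_apply hsub hL', log_subst_exp_sub_one, subst_X hL']

end ExpLog

section DegreeBound
variable {R : Type*} [CommRing R] {m : ℕ}

def NatDegreeCoeffLE (m : ℕ) (u : R[X]⟦X⟧) : Prop :=
  ∀ k, (coeff k u).natDegree ≤ k * m

namespace NatDegreeCoeffLE

theorem one : NatDegreeCoeffLE m (1 : R[X]⟦X⟧) := fun k => by
  rw [coeff_one]
  split_ifs <;> simp

theorem mul {u v : R[X]⟦X⟧} (hu : NatDegreeCoeffLE m u) (hv : NatDegreeCoeffLE m v) :
    NatDegreeCoeffLE m (u * v) := fun k => by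
  rw [coeff_mul]
  refine Polynomial.natDegree_sum_le_of_forall_le _ _ fun p hp => ?_
  rw [← HasAntidiagonal.mem_antidiagonal.1 hp, add_mul]
  exact Polynomial.natDegree_mul_le_of_le (hu p.1) (hv p.2)

theorem pow {u : R[X]⟦X⟧} (hu : NatDegreeCoeffLE m u) (r : ℕ) : NatDegreeCoeffLE m (u ^ r) := by
  induction r with
  | zero => simpa using one
  | succ r ih => simpa [pow_succ] using ih.mul hu

theorem expPS [Algebra ℚ R] {u : R[X]⟦X⟧} (hu : NatDegreeCoeffLE m u) :
    NatDegreeCoeffLE m (expPS u) := fun k => by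
  rw [_root_.expPS, coeff_mk]
  exact Polynomial.natDegree_sum_le_of_forall_le _ _ fun r _ =>
    (Polynomial.natDegree_smul_le _ _).trans (hu.pow r k)

end NatDegreeCoeffLE

end DegreeBound

section EvalAtOne
variable {R : Type*} [CommRing R]

-- `u = ∑ₖ uₖ Sᵏ` with `uₖ ∈ R⟦T⟧`; the sum `evalAtOne u = ∑ₖ uₖ` is meaningful when `Tᵏ ∣ uₖ`.
def CoeffOrderGE (u : R⟦X⟧⟦X⟧) : Prop :=
  ∀ k j, j < k → coeff j (coeff k u) = 0

noncomputable def evalAtOne (u : R⟦X⟧⟦X⟧) : R⟦X⟧ :=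
  mk fun j => ∑ k ∈ range (j + 1), coeff j (coeff k u)

theorem coeff_evalAtOne (u : R⟦X⟧⟦X⟧) (j : ℕ) :
    coeff j (evalAtOne u) = ∑ k ∈ range (j + 1), coeff j (coeff k u) :=
  coeff_mk _ _

theorem coeff_evalAtOne_eq_sum_range {u : R⟦X⟧⟦X⟧} (hu : CoeffOrderGE u) {j N : ℕ} (hN : j < N) :
    coeff j (evalAtOne u) = ∑ k ∈ range N, coeff j (coeff k u) := by
  rw [coeff_evalAtOne]
  refine sum_subset (range_subset_range.2 hN) fun k _ hk => hu k j ?_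
  rw [mem_range, not_lt] at hk
  omega

namespace CoeffOrderGE

variable {u v : R⟦X⟧⟦X⟧}

theorem coeff_mul_coeff_eq_zero (hu : CoeffOrderGE u) (hv : CoeffOrderGE v) {k₁ k₂ j : ℕ}
    (h : j < k₁ + k₂) : coeff j (coeff k₁ u * coeff k₂ v) = 0 := by
  rw [coeff_mul]
  refine sum_eq_zero fun p hp => ?_
  rw [HasAntidiagonal.mem_antidiagonal] at hp
  rcases lt_or_ge p.1 k₁ with h₁ | h₁
  · rw [hu _ _ h₁, zero_mul]
  · rw [hv _ _ (by omega), mul_zero]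

theorem one : CoeffOrderGE (1 : R⟦X⟧⟦X⟧) := fun k j hj => by
  rw [coeff_one, if_neg (by omega), map_zero]

theorem mul (hu : CoeffOrderGE u) (hv : CoeffOrderGE v) : CoeffOrderGE (u * v) := fun k j hj => by
  rw [coeff_mul, map_sum]
  exact sum_eq_zero fun p hp =>
    hu.coeff_mul_coeff_eq_zero hv (by rwa [HasAntidiagonal.mem_antidiagonal.1 hp])

theorem pow (hu : CoeffOrderGE u) (r : ℕ) : CoeffOrderGE (u ^ r) := by
  induction r with
  | zero => simpa using one
  | succ r ih => simpa [pow_succ] using ih.mul hu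

end CoeffOrderGE

theorem evalAtOne_one : evalAtOne (1 : R⟦X⟧⟦X⟧) = 1 := by
  ext j
  rw [coeff_evalAtOne, sum_eq_single 0 (fun k _ hk => by rw [coeff_one, if_neg hk, map_zero])
    (by simp), coeff_zero_one]

theorem evalAtOne_mul {u v : R⟦X⟧⟦X⟧} (hu : CoeffOrderGE u) (hv : CoeffOrderGE v) :
    evalAtOne (u * v) = evalAtOne u * evalAtOne v := by
  ext j
  set N := j + 1
  set F : ℕ × ℕ → R := fun k => coeff j (coeff k.1 u * coeff k.2 v)
  have hfiber : ∀ k ∈ range N,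
      {p ∈ (range N ×ˢ range N).filter (fun p => p.1 + p.2 < N) | p.1 + p.2 = k} =
        antidiagonal k := fun k hk => by
    ext p
    simp only [mem_filter, mem_product, mem_range,
      HasAntidiagonal.mem_antidiagonal] at hk ⊢
    omega
  calc coeff j (evalAtOne (u * v))
      = ∑ k ∈ range N, ∑ p ∈ antidiagonal k, F p := by
        simp only [coeff_evalAtOne, coeff_mul, map_sum, F, N]
    _ = ∑ p ∈ (range N ×ˢ range N).filter (fun p => p.1 + p.2 < N), F p := by
        rw [← sum_fiberwise_of_maps_to (g := fun p : ℕ × ℕ => p.1 + p.2) (t := range N)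
          fun p hp => by simpa using (mem_filter.1 hp).2]
        exact sum_congr rfl fun k hk => by rw [hfiber k hk]
    _ = ∑ p ∈ range N ×ˢ range N, F p := by
        refine sum_filter_of_ne fun p _ hp => ?_
        by_contra h
        exact hp (hu.coeff_mul_coeff_eq_zero hv (by omega))
    _ = coeff j ((∑ k ∈ range N, coeff k u) * ∑ k ∈ range N, coeff k v) := by
        rw [sum_mul_sum, ← sum_product', map_sum]
    _ = coeff j (evalAtOne u * evalAtOne v) := by
        rw [coeff_mul, coeff_mul]
        refine sum_congr rfl fun p hp => ?_
        rw [HasAntidiagonal.mem_antidiagonal] at hp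
        rw [map_sum, map_sum, coeff_evalAtOne_eq_sum_range hu (show p.1 < N by omega),
          coeff_evalAtOne_eq_sum_range hv (show p.2 < N by omega)]

theorem evalAtOne_pow {u : R⟦X⟧⟦X⟧} (hu : CoeffOrderGE u) (r : ℕ) :
    evalAtOne (u ^ r) = evalAtOne u ^ r := by
  induction r with
  | zero => rw [pow_zero, pow_zero, evalAtOne_one]
  | succ r ih => rw [pow_succ, pow_succ, evalAtOne_mul (hu.pow r) hu, ih]

theorem evalAtOne_expPS [Algebra ℚ R] {u : R⟦X⟧⟦X⟧} (hu : CoeffOrderGE u)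
    (hu₀ : constantCoeff u = 0) : evalAtOne (expPS u) = expPS (evalAtOne u) := by
  ext j
  rw [coeff_evalAtOne]
  calc ∑ k ∈ range (j + 1), coeff j (coeff k (_root_.expPS u))
      = ∑ k ∈ range (j + 1), ∑ r ∈ range (j + 1),
          (r.factorial : ℚ)⁻¹ • coeff j (coeff k (u ^ r)) := by
        refine sum_congr rfl fun k hk => ?_
        rw [coeff_expPS_eq_sum_range hu₀ (mem_range.1 hk), map_sum]
        simp only [LinearMap.map_smul_of_tower]
    _ = coeff j (_root_.expPS (evalAtOne u)) := by
        rw [sum_comm, expPS, coeff_mk]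
        refine sum_congr rfl fun r _ => ?_
        rw [← evalAtOne_pow hu, coeff_evalAtOne, smul_sum]

end EvalAtOne

section MapCoeff
variable {A B C : Type*} [CommRing A] [CommRing B] [CommRing C]
  [Algebra ℚ A] [Algebra ℚ B] [Algebra ℚ C]

@[simp]
theorem coeff_mapCoeff (f : A →ₗ[ℚ] B) (p : A⟦X⟧) (k : ℕ) :
    coeff k (mapCoeff f p) = f (coeff k p) :=
  coeff_mk _ _

theorem mapCoeff_comp (f : B →ₗ[ℚ] C) (g : A →ₗ[ℚ] B) (p : A⟦X⟧) :
    mapCoeff (f ∘ₗ g) p = mapCoeff f (mapCoeff g p) := by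
  ext; simp

noncomputable def mapCoeffₗ (f : A →ₗ[ℚ] B) : A⟦X⟧ →ₗ[ℚ] B⟦X⟧ where
  toFun := mapCoeff f
  map_add' p q := by ext; simp
  map_smul' c p := by ext; simp

theorem map_expPS (π : B →ₐ[ℚ] C) (q : B⟦X⟧) :
    map (π : B →+* C) (expPS q) = expPS (map (π : B →+* C) q) := by
  ext k
  simp [expPS, ← map_pow]

theorem psi_algHom_comp (π : B →ₐ[ℚ] C) (f : A →ₗ[ℚ] B) (a : A) (k : ℕ) :
    psi (π.toLinearMap ∘ₗ f) a k = π (psi f a k) := by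
  have : mapCoeff (π.toLinearMap ∘ₗ f) (logOneAdd a) =
      map (π : B →+* C) (mapCoeff f (logOneAdd a)) := by
    ext j; simp
  rw [psi, charFun, this, ← map_expPS, coeff_map]
  rfl

theorem psi_comp_algHom (f : B →ₗ[ℚ] C) (φ : A →ₐ[ℚ] B) (a : A) (k : ℕ) :
    psi (f ∘ₗ φ.toLinearMap) a k = psi f (φ a) k := by
  have : mapCoeff (f ∘ₗ φ.toLinearMap) (logOneAdd a) = mapCoeff f (logOneAdd (φ a)) := by
    ext j; simp [logOneAdd]
  rw [psi, psi, charFun, charFun, this]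

theorem constantCoeff_mapCoeff_logOneAdd (f : A →ₗ[ℚ] B) (a : A) :
    constantCoeff (mapCoeff f (logOneAdd a)) = 0 := by
  rw [← coeff_zero_eq_constantCoeff_apply, coeff_mapCoeff, logOneAdd, coeff_mk]
  simp

theorem CoeffOrderGE.mapCoeff_logOneAdd (f : B →ₗ[ℚ] C) {b : B⟦X⟧} (hb : constantCoeff b = 0) :
    CoeffOrderGE (mapCoeff (mapCoeffₗ f) (logOneAdd b)) := fun k j hj => by
  simp [mapCoeffₗ, logOneAdd, coeff_pow_eq_zero_of_lt hb hj]

theorem evalAtOne_mapCoeff_logOneAdd (f : B →ₗ[ℚ] C) {b : B⟦X⟧} (hb : constantCoeff b = 0) :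
    evalAtOne (mapCoeff (mapCoeffₗ f) (logOneAdd b)) = mapCoeff f ((log B).subst b) := by
  ext j
  rw [coeff_evalAtOne, coeff_mapCoeff, coeff_subst_eq_sum_range _ hb j.lt_succ_self, map_sum]
  refine sum_congr rfl fun k _ => ?_
  simp only [mapCoeffₗ, logOneAdd, LinearMap.coe_mk, AddHom.coe_mk, coeff_mapCoeff, coeff_mk,
    LinearMap.map_smul_of_tower, coeff_log]
  split_ifs with hk
  · simp [hk]
  · rw [algebraMap_smul, map_smul]

theorem charFun_comp (f : B →ₗ[ℚ] C) (g : A →ₗ[ℚ] B) (a : A) :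
    charFun (f ∘ₗ g) a = evalAtOne (charFun (mapCoeffₗ f) (charFun g a - 1)) := by
  have hb : constantCoeff (charFun g a - 1) = 0 := by
    rw [map_sub, charFun, constantCoeff_expPS, map_one, sub_self]
  unfold charFun at hb ⊢
  rw [evalAtOne_expPS (CoeffOrderGE.mapCoeff_logOneAdd f hb)
    (constantCoeff_mapCoeff_logOneAdd _ _), evalAtOne_mapCoeff_logOneAdd f hb,
    log_subst_expPS_sub_one (constantCoeff_mapCoeff_logOneAdd g a), mapCoeff_comp]

end MapCoeff

section PolyMap
variable {B C : Type*} [CommRing B] [CommRing C] [Algebra ℚ B] [Algebra ℚ C]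

noncomputable def polyMap (f : B →ₗ[ℚ] C) : B[X] →ₗ[ℚ] C[X] :=
  Polynomial.lsum fun e => (Polynomial.monomial e).restrictScalars ℚ ∘ₗ f

@[simp]
theorem coeff_polyMap (f : B →ₗ[ℚ] C) (p : B[X]) (j : ℕ) :
    (polyMap f p).coeff j = f (p.coeff j) := by
  simp only [polyMap, Polynomial.lsum_apply, LinearMap.coe_comp, LinearMap.coe_restrictScalars,
    Function.comp_apply]
  rw [Polynomial.sum_def, Polynomial.finsetSum_coeff]
  simp only [Polynomial.coeff_monomial, sum_ite_eq', Polynomial.mem_support_iff]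
  split_ifs with h
  · rfl
  · rw [Polynomial.notMem_support_iff.1 h, map_zero]

theorem natDegree_polyMap_le (f : B →ₗ[ℚ] C) (p : B[X]) : (polyMap f p).natDegree ≤ p.natDegree :=
  Polynomial.natDegree_le_iff_coeff_eq_zero.2 fun N hN => by
    rw [coeff_polyMap, Polynomial.coeff_eq_zero_of_natDegree_lt hN, map_zero]

theorem eval_polyMap (f : B →ₗ[ℚ] C) (p : B[X]) (t : ℚ) :
    (polyMap f p).eval (algebraMap ℚ C t) = f (p.eval (algebraMap ℚ B t)) := by
  rw [Polynomial.eval_eq_sum_range' (Nat.lt_succ_of_le (natDegree_polyMap_le f p)),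
    Polynomial.eval_eq_sum_range, map_sum]
  refine sum_congr rfl fun e _ => ?_
  rw [coeff_polyMap, ← map_pow, ← map_pow, mul_comm, ← Algebra.smul_def, mul_comm,
    ← Algebra.smul_def, map_smul]

theorem Polynomial.eq_zero_of_forall_eval_algebraMap_eq_zero {q : C[X]}
    (hq : ∀ t : ℚ, q.eval (algebraMap ℚ C t) = 0) : q = 0 := by
  let b := Module.Basis.ofVectorSpace ℚ C
  ext j
  rw [Polynomial.coeff_zero, ← b.forall_coord_eq_zero_iff]
  intro i
  have hzero : polyMap (b.coord i) q = 0 := Polynomial.funext fun t => by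
    simpa [hq] using eval_polyMap (b.coord i) q t
  simpa using congrArg (Polynomial.coeff · j) hzero

theorem coe_polyMap (f : B →ₗ[ℚ] C) (p : B[X]) : (polyMap f p : C⟦X⟧) = mapCoeff f p := by
  ext j; simp

theorem IsNHom.polyMap {f : B →ₗ[ℚ] C} {n : ℕ} (hf : IsNHom f n) : IsNHom (polyMap f) n := by
  refine ⟨?_, fun k hk p => ?_⟩
  · ext j
    rw [coeff_polyMap, Polynomial.coeff_smul, Polynomial.coeff_one, Polynomial.coeff_one]
    split_ifs
    · exact hf.1
    · rw [map_zero, smul_zero]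
  · refine Polynomial.eq_zero_of_forall_eval_algebraMap_eq_zero fun t => ?_
    let evB := (Polynomial.evalRingHom (algebraMap ℚ B t)).toRatAlgHom
    let evC := (Polynomial.evalRingHom (algebraMap ℚ C t)).toRatAlgHom
    have hcomm : evC.toLinearMap ∘ₗ _root_.polyMap f = f ∘ₗ evB.toLinearMap :=
      LinearMap.ext fun p => eval_polyMap f p t
    have := psi_algHom_comp evC (_root_.polyMap f) p k
    rw [hcomm, psi_comp_algHom] at this
    exact this.symm.trans (hf.2 k hk _)

theorem psi_mapCoeffₗ_coe (f : B →ₗ[ℚ] C) (p : B[X]) (k : ℕ) :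
    psi (mapCoeffₗ f) (p : B⟦X⟧) k = ((psi (polyMap f) p k : C[X]) : C⟦X⟧) := by
  let coeB := (Polynomial.coeToPowerSeries.ringHom (R := B)).toRatAlgHom
  let coeC := (Polynomial.coeToPowerSeries.ringHom (R := C)).toRatAlgHom
  have hcomm : mapCoeffₗ f ∘ₗ coeB.toLinearMap = coeC.toLinearMap ∘ₗ polyMap f :=
    LinearMap.ext fun p => (coe_polyMap f p).symm
  have := psi_comp_algHom (mapCoeffₗ f) coeB p k
  rw [hcomm, psi_algHom_comp] at this
  exact this.symm

theorem natDegree_psi_polyMap_le (f : B →ₗ[ℚ] C) {p : B[X]} {m : ℕ} (hp : p.natDegree ≤ m)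
    (k : ℕ) : (psi (polyMap f) p k).natDegree ≤ k * m := by
  have hu : NatDegreeCoeffLE m (mapCoeff (polyMap f) (logOneAdd p)) := fun k => by
    rw [coeff_mapCoeff, logOneAdd, coeff_mk, map_smul]
    exact (Polynomial.natDegree_smul_le _ _).trans
      ((natDegree_polyMap_le f _).trans (Polynomial.natDegree_pow_le_of_le k hp))
  exact hu.expPS k

end PolyMap

theorem IsNHom.exists_natDegree_le_coe_eq {A B : Type*} [CommRing A] [CommRing B]
    [Algebra ℚ A] [Algebra ℚ B] {g : A →ₗ[ℚ] B} {m : ℕ} (hg : IsNHom g m) (a : A) :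
    ∃ p : B[X], p.natDegree ≤ m ∧ (p : B⟦X⟧) = charFun g a - 1 := by
  refine ⟨trunc (m + 1) (charFun g a - 1), Nat.lt_succ_iff.1 (natDegree_trunc_lt _ m), ?_⟩
  ext j
  rcases lt_or_ge j (m + 1) with hj | hj
  · exact coeff_coe_trunc_of_lt hj
  · rw [Polynomial.coeff_coe, coeff_trunc, if_neg (by omega), map_sub, coeff_one,
      if_neg (by omega), sub_zero]
    exact (hg.2 j hj a).symm

/-- the composition of an `m`-homomorphism `g : A → B` with an
`n`-homomorphism `f : B → C` is an `nm`-homomorphism. -/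
theorem stmt12 {A B C : Type*} [CommRing A] [CommRing B] [CommRing C]
    [Algebra ℚ A] [Algebra ℚ B] [Algebra ℚ C]
    (g : A →ₗ[ℚ] B) (f : B →ₗ[ℚ] C) (m n : ℕ)
    (hg : IsNHom g m) (hf : IsNHom f n) :
    IsNHom (f ∘ₗ g) (n * m) := by
  refine ⟨by rw [LinearMap.comp_apply, hg.1, map_nsmul, hf.1, smul_smul, mul_comm],
    fun k hk a => ?_⟩
  obtain ⟨p, hpm, hp⟩ := hg.exists_natDegree_le_coe_eq a
  rw [psi, charFun_comp, ← hp, coeff_evalAtOne]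
  refine sum_eq_zero fun k' _ => ?_
  rw [← psi, psi_mapCoeffₗ_coe, Polynomial.coeff_coe]
  rcases le_or_gt k' n with hk' | hk'
  · exact Polynomial.coeff_eq_zero_of_natDegree_lt
      ((natDegree_psi_polyMap_le f hpm k').trans_lt (by nlinarith))
  · rw [hf.polyMap.2 k' hk' p, Polynomial.coeff_zero]
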